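/- Let X be a topological space equipped with the identity involution. Then every 'real' vector bundle (E, Θ) over (X, id_X) is isomorphic, as a 'real' vector bundle, to the complexification F ⊗_ℝ ℂ of an ℝ-vector bundle F over X (with the 'real' structure on F ⊗_ℝ ℂ given by complex conjugation in the second tensor factor); concretely, F may be taken to be the fixed-point set E^Θ of Θ, which is an ℝ-vector bundle over X, and E ≅ E^Θ ⊗_ℝ ℂ. -/

import Mathlib

open scoped ComplexConjugate
open Topology

noncomputable section

/-! ### Complex vector bundles (concrete, locally trivial) -/

/-- A (locally trivial) complex vector bundle of rank `k` over the space `X`.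
The fibrewise addition and scalar multiplication are given as globally defined
operations (with junk values on pairs lying in different fibres); local
triviality via fibrewise-linear homeomorphisms over open sets forces each fibre
to be a complex vector space isomorphic to `ℂ^k`. -/
structure CplxBundle (X : Type) [TopologicalSpace X] (k : ℕ) : Type 1 where
  E : Type
  [topE : TopologicalSpace E]
  proj : E → X
  proj_cont : Continuous proj
  add : E → E → E
  smul : ℂ → E → E
  proj_add : ∀ e f, proj e = proj f → proj (add e f) = proj e
  proj_smul : ∀ c e, proj (smul c e) = proj e
  locTriv : ∀ x : X, ∃ (U : Set X) (φ : ↥(proj ⁻¹' U) ≃ₜ ↥U × (Fin k → ℂ)),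
      IsOpen U ∧ x ∈ U ∧
      (∀ e : ↥(proj ⁻¹' U), ((φ e).1 : X) = proj e.val) ∧
      (∀ e f : ↥(proj ⁻¹' U), proj e.val = proj f.val →
        ∀ hmem : add e.val f.val ∈ proj ⁻¹' U,
          (φ ⟨add e.val f.val, hmem⟩).2 = (φ e).2 + (φ f).2) ∧
      (∀ (c : ℂ) (e : ↥(proj ⁻¹' U)), ∀ hmem : smul c e.val ∈ proj ⁻¹' U,
          (φ ⟨smul c e.val, hmem⟩).2 = c • (φ e).2)

attribute [instance] CplxBundle.topE

/-- A complex vector bundle together with an anti-linear homeomorphism `Θ` of the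
total space lifting the involution `τ` of the base. -/
structure InvBundle (X : Type) [TopologicalSpace X] (τ : X → X) (k : ℕ)
    extends CplxBundle X k where
  Θ : E ≃ₜ E
  proj_Θ : ∀ e, proj (Θ e) = τ (proj e)
  Θ_add : ∀ e f, proj e = proj f → Θ (add e f) = add (Θ e) (Θ f)
  Θ_smul : ∀ (c : ℂ) (e : E), Θ (smul c e) = smul ((starRingEnd ℂ) c) (Θ e)

/-- A "real" vector bundle over the involutive space `(X, τ)`: the structure map
`Θ` squares to the identity. -/
structure RealBundle (X : Type) [TopologicalSpace X] (τ : X → X) (k : ℕ)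
    extends InvBundle X τ k where
  Θ_invol : ∀ e, Θ (Θ e) = e

/-- A "quaternionic" vector bundle over the involutive space `(X, τ)`: the structure
map `Θ` squares to fibrewise multiplication by `-1`. -/
structure QuatBundle (X : Type) [TopologicalSpace X] (τ : X → X) (k : ℕ)
    extends InvBundle X τ k where
  Θ_sq : ∀ e, Θ (Θ e) = smul (-1) e

/-- The total space of the direct sum of two bundles: the fibre product. -/
abbrev fiberProd {X : Type} [TopologicalSpace X] {k₁ k₂ : ℕ}
    (W₁ : CplxBundle X k₁) (W₂ : CplxBundle X k₂) : Type :=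
  {p : W₁.E × W₂.E // W₁.proj p.1 = W₂.proj p.2}

/-- The total space of the restriction of a bundle to a subset `A` of the base. -/
abbrev restrictTotal {X : Type} [TopologicalSpace X] {k : ℕ}
    (V : CplxBundle X k) (A : Set X) : Type :=
  {e : V.E // V.proj e ∈ A}

/-! ### Isomorphisms of bundles with involutive structure maps -/

/-- An isomorphism of "real"/"quaternionic" vector bundles: a homeomorphism of total
spaces over the base which is fibrewise linear and intertwines the structure maps. -/
structure InvIso {X : Type} [TopologicalSpace X] {τ : X → X} {k k' : ℕ}
    (V : InvBundle X τ k) (W : InvBundle X τ k') where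
  g : V.E ≃ₜ W.E
  over' : ∀ e, W.proj (g e) = V.proj e
  map_add : ∀ e f, V.proj e = V.proj f → g (V.add e f) = W.add (g e) (g f)
  map_smul : ∀ (c : ℂ) (e : V.E), g (V.smul c e) = W.smul c (g e)
  map_Θ : ∀ e, g (V.Θ e) = W.Θ (g e)

/-- An isomorphism `V ≅ W₁ ⊕ W₂` of "real"/"quaternionic" vector bundles. -/
structure InvSumIso {X : Type} [TopologicalSpace X] {τ : X → X} {k k₁ k₂ : ℕ}
    (V : InvBundle X τ k) (W₁ : InvBundle X τ k₁) (W₂ : InvBundle X τ k₂) where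
  g : fiberProd W₁.toCplxBundle W₂.toCplxBundle ≃ₜ V.E
  over' : ∀ p, V.proj (g p) = W₁.proj p.val.1
  map_add : ∀ p q : fiberProd W₁.toCplxBundle W₂.toCplxBundle,
    W₁.proj p.val.1 = W₁.proj q.val.1 →
    ∀ hmem : W₁.proj (W₁.add p.val.1 q.val.1) = W₂.proj (W₂.add p.val.2 q.val.2),
      g ⟨(W₁.add p.val.1 q.val.1, W₂.add p.val.2 q.val.2), hmem⟩ = V.add (g p) (g q)
  map_smul : ∀ (c : ℂ) (p : fiberProd W₁.toCplxBundle W₂.toCplxBundle),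
    ∀ hmem : W₁.proj (W₁.smul c p.val.1) = W₂.proj (W₂.smul c p.val.2),
      g ⟨(W₁.smul c p.val.1, W₂.smul c p.val.2), hmem⟩ = V.smul c (g p)
  map_Θ : ∀ p : fiberProd W₁.toCplxBundle W₂.toCplxBundle,
    ∀ hmem : W₁.proj (W₁.Θ p.val.1) = W₂.proj (W₂.Θ p.val.2),
      g ⟨(W₁.Θ p.val.1, W₂.Θ p.val.2), hmem⟩ = V.Θ (g p)

/-- An isomorphism `V₁ ⊕ V₂ ≅ W₁ ⊕ W₂` of "real"/"quaternionic" vector bundles. -/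
structure InvSum2Iso {X : Type} [TopologicalSpace X] {τ : X → X} {k₁ k₂ l₁ l₂ : ℕ}
    (V₁ : InvBundle X τ k₁) (V₂ : InvBundle X τ k₂)
    (W₁ : InvBundle X τ l₁) (W₂ : InvBundle X τ l₂) where
  g : fiberProd V₁.toCplxBundle V₂.toCplxBundle ≃ₜ fiberProd W₁.toCplxBundle W₂.toCplxBundle
  over' : ∀ p, W₁.proj (g p).val.1 = V₁.proj p.val.1
  map_add : ∀ p q : fiberProd V₁.toCplxBundle V₂.toCplxBundle,
    V₁.proj p.val.1 = V₁.proj q.val.1 →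
    ∀ hmem : V₁.proj (V₁.add p.val.1 q.val.1) = V₂.proj (V₂.add p.val.2 q.val.2),
      (g ⟨(V₁.add p.val.1 q.val.1, V₂.add p.val.2 q.val.2), hmem⟩).val
        = (W₁.add (g p).val.1 (g q).val.1, W₂.add (g p).val.2 (g q).val.2)
  map_smul : ∀ (c : ℂ) (p : fiberProd V₁.toCplxBundle V₂.toCplxBundle),
    ∀ hmem : V₁.proj (V₁.smul c p.val.1) = V₂.proj (V₂.smul c p.val.2),
      (g ⟨(V₁.smul c p.val.1, V₂.smul c p.val.2), hmem⟩).val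
        = (W₁.smul c (g p).val.1, W₂.smul c (g p).val.2)
  map_Θ : ∀ p : fiberProd V₁.toCplxBundle V₂.toCplxBundle,
    ∀ hmem : V₁.proj (V₁.Θ p.val.1) = V₂.proj (V₂.Θ p.val.2),
      (g ⟨(V₁.Θ p.val.1, V₂.Θ p.val.2), hmem⟩).val
        = (W₁.Θ (g p).val.1, W₂.Θ (g p).val.2)

/-- An isomorphism `V|_A ≅ W|_A` between the restrictions to `A` of two bundles over `X`. -/
structure InvIsoRestrict {X : Type} [TopologicalSpace X] {τ : X → X} {k k' : ℕ}
    (A : Set X) (V : InvBundle X τ k) (W : InvBundle X τ k') where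
  g : restrictTotal V.toCplxBundle A ≃ₜ restrictTotal W.toCplxBundle A
  over' : ∀ e, W.proj (g e).val = V.proj e.val
  map_add : ∀ e f : restrictTotal V.toCplxBundle A, V.proj e.val = V.proj f.val →
    ∀ hmem : V.proj (V.add e.val f.val) ∈ A,
      (g ⟨V.add e.val f.val, hmem⟩).val = W.add (g e).val (g f).val
  map_smul : ∀ (c : ℂ) (e : restrictTotal V.toCplxBundle A),
    ∀ hmem : V.proj (V.smul c e.val) ∈ A,
      (g ⟨V.smul c e.val, hmem⟩).val = W.smul c (g e).val
  map_Θ : ∀ e : restrictTotal V.toCplxBundle A, ∀ hmem : V.proj (V.Θ e.val) ∈ A,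
      (g ⟨V.Θ e.val, hmem⟩).val = W.Θ (g e).val

/-- An isomorphism between a bundle `W` over the subspace `↥A` and the restriction to
`A` of a bundle `V` over `X`. -/
structure InvIsoOn {X : Type} [TopologicalSpace X] {τ : X → X} {k : ℕ}
    (A : Set X) {τA : ↥A → ↥A} (W : InvBundle ↥A τA k) (V : InvBundle X τ k) where
  g : W.E ≃ₜ restrictTotal V.toCplxBundle A
  over' : ∀ w, V.proj (g w).val = (W.proj w : X)
  map_add : ∀ v w, W.proj v = W.proj w → (g (W.add v w)).val = V.add (g v).val (g w).val
  map_smul : ∀ (c : ℂ) (w : W.E), (g (W.smul c w)).val = V.smul c (g w).val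
  map_Θ : ∀ w, (g (W.Θ w)).val = V.Θ (g w).val

/-- An isomorphism `V|_A ≅ W₁ ⊕ W₂`, where `V` is a bundle over `X` and `W₁`, `W₂`
are bundles over the subspace `↥A`. -/
structure InvSumIsoOn {X : Type} [TopologicalSpace X] {τ : X → X} {k k₁ k₂ : ℕ}
    (V : InvBundle X τ k) (A : Set X) {τA : ↥A → ↥A}
    (W₁ : InvBundle ↥A τA k₁) (W₂ : InvBundle ↥A τA k₂) where
  g : fiberProd W₁.toCplxBundle W₂.toCplxBundle ≃ₜ restrictTotal V.toCplxBundle A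
  over' : ∀ p, V.proj (g p).val = (W₁.proj p.val.1 : X)
  map_add : ∀ p q : fiberProd W₁.toCplxBundle W₂.toCplxBundle,
    W₁.proj p.val.1 = W₁.proj q.val.1 →
    ∀ hmem : W₁.proj (W₁.add p.val.1 q.val.1) = W₂.proj (W₂.add p.val.2 q.val.2),
      (g ⟨(W₁.add p.val.1 q.val.1, W₂.add p.val.2 q.val.2), hmem⟩).val
        = V.add (g p).val (g q).val
  map_smul : ∀ (c : ℂ) (p : fiberProd W₁.toCplxBundle W₂.toCplxBundle),
    ∀ hmem : W₁.proj (W₁.smul c p.val.1) = W₂.proj (W₂.smul c p.val.2),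
      (g ⟨(W₁.smul c p.val.1, W₂.smul c p.val.2), hmem⟩).val = V.smul c (g p).val
  map_Θ : ∀ p : fiberProd W₁.toCplxBundle W₂.toCplxBundle,
    ∀ hmem : W₁.proj (W₁.Θ p.val.1) = W₂.proj (W₂.Θ p.val.2),
      (g ⟨(W₁.Θ p.val.1, W₂.Θ p.val.2), hmem⟩).val = V.Θ (g p).val

/-! ### Trivial bundles -/

/-- The local trivialization (over `Set.univ`) of a product bundle. -/
def trivialLocHomeo (X : Type) [TopologicalSpace X] (F : Type) [TopologicalSpace F] :
    ↥((Prod.fst : X × F → X) ⁻¹' (Set.univ : Set X)) ≃ₜ ↥(Set.univ : Set X) × F where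
  toFun e := (⟨e.val.1, trivial⟩, e.val.2)
  invFun p := ⟨(p.1.val, p.2), trivial⟩
  left_inv _ := rfl
  right_inv _ := rfl
  continuous_toFun := by
    exact ((continuous_fst.comp continuous_subtype_val).subtype_mk _).prodMk
      (continuous_snd.comp continuous_subtype_val)
  continuous_invFun := by
    exact ((continuous_subtype_val.comp continuous_fst).prodMk continuous_snd).subtype_mk _

/-- The trivial "real" vector bundle `θ^k_X = X × ℂ^k` with `Θ(x, v) = (τ x, conj v)`. -/
def trivialReal (X : Type) [TopologicalSpace X] (τ : X → X)
    (hτc : Continuous τ) (hτ2 : ∀ x, τ (τ x) = x) (k : ℕ) : RealBundle X τ k where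
  E := X × (Fin k → ℂ)
  proj := Prod.fst
  proj_cont := continuous_fst
  add e f := (e.1, e.2 + f.2)
  smul c e := (e.1, c • e.2)
  proj_add _ _ _ := rfl
  proj_smul _ _ := rfl
  locTriv _ := ⟨Set.univ, trivialLocHomeo X (Fin k → ℂ), isOpen_univ, trivial,
    fun _ => rfl, fun _ _ _ _ => rfl, fun _ _ _ => rfl⟩
  Θ :=
    { toFun := fun e => (τ e.1, fun i => (starRingEnd ℂ) (e.2 i))
      invFun := fun e => (τ e.1, fun i => (starRingEnd ℂ) (e.2 i))
      left_inv := fun e => Prod.ext (hτ2 e.1) (funext fun i => Complex.conj_conj (e.2 i))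
      right_inv := fun e => Prod.ext (hτ2 e.1) (funext fun i => Complex.conj_conj (e.2 i))
      continuous_toFun := (hτc.comp continuous_fst).prodMk
        (continuous_pi fun i => Complex.continuous_conj.comp
          ((continuous_apply i).comp continuous_snd))
      continuous_invFun := (hτc.comp continuous_fst).prodMk
        (continuous_pi fun i => Complex.continuous_conj.comp
          ((continuous_apply i).comp continuous_snd)) }
  proj_Θ _ := rfl
  Θ_add e f _ := Prod.ext rfl (funext fun i => map_add (starRingEnd ℂ) (e.2 i) (f.2 i))
  Θ_smul c e := Prod.ext rfl (funext fun i => map_mul (starRingEnd ℂ) c (e.2 i))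
  Θ_invol e := Prod.ext (hτ2 e.1) (funext fun i => Complex.conj_conj (e.2 i))

/-- The "quaternionic" conjugation on `ℂ^{2k}`:
`(λ₁, λ₂, …) ↦ (conj λ₂, -conj λ₁, …)`. -/
def qConj (k : ℕ) (v : Fin (2 * k) → ℂ) : Fin (2 * k) → ℂ := fun i =>
  if h : i.val % 2 = 0 then
    (starRingEnd ℂ) (v ⟨i.val + 1, by have := i.isLt; omega⟩)
  else
    - (starRingEnd ℂ) (v ⟨i.val - 1, by have := i.isLt; omega⟩)

lemma qConj_qConj (k : ℕ) (v : Fin (2 * k) → ℂ) : qConj k (qConj k v) = fun i => -(v i) := by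
  funext i
  rcases Nat.even_or_odd i.val with h | h
  · have h0 : i.val % 2 = 0 := Nat.even_iff.mp h
    have h1 : ¬ ((i.val + 1) % 2 = 0) := by omega
    simp only [qConj, dif_pos h0, dif_neg h1, map_neg, Complex.conj_conj, Fin.eta]
    first
      | rfl
      | · congr 1
          exact congrArg v (Fin.ext (by omega))
  · have h0 : ¬ (i.val % 2 = 0) := by
      have := Nat.odd_iff.mp h; omega
    have h1 : (i.val - 1) % 2 = 0 := by
      have := Nat.odd_iff.mp h; omega
    simp only [qConj, dif_neg h0, dif_pos h1, map_neg, Complex.conj_conj]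
    first
      | rfl
      | · congr 1
          exact congrArg v (Fin.ext (show i.val - 1 + 1 = i.val by
            have := Nat.odd_iff.mp h; omega))

lemma qConj_add (k : ℕ) (v w : Fin (2 * k) → ℂ) :
    qConj k (v + w) = qConj k v + qConj k w := by
  funext i
  by_cases h : i.val % 2 = 0 <;> simp [qConj, h, map_add] <;> ring

lemma qConj_smul (k : ℕ) (c : ℂ) (v : Fin (2 * k) → ℂ) :
    qConj k (c • v) = (starRingEnd ℂ) c • qConj k v := by
  funext i
  by_cases h : i.val % 2 = 0 <;>
    simp [qConj, h, map_mul, mul_neg]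

lemma qConj_neg (k : ℕ) (v : Fin (2 * k) → ℂ) : qConj k (-v) = -(qConj k v) := by
  have := qConj_smul k (-1) v
  simpa [neg_one_smul] using this

lemma continuous_qConj (k : ℕ) : Continuous (qConj k) := by
  refine continuous_pi fun i => ?_
  by_cases h : i.val % 2 = 0
  · simp only [qConj, dif_pos h]
    exact Complex.continuous_conj.comp (continuous_apply _)
  · simp only [qConj, dif_neg h]
    exact (Complex.continuous_conj.comp (continuous_apply _)).neg

/-- The trivial "quaternionic" vector bundle `θ^{2k}_X = X × ℂ^{2k}` with
`Θ(x, λ₁, λ₂, …) = (τ x, conj λ₂, -conj λ₁, …)`. -/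
def trivialQuat (X : Type) [TopologicalSpace X] (τ : X → X)
    (hτc : Continuous τ) (hτ2 : ∀ x, τ (τ x) = x) (k : ℕ) : QuatBundle X τ (2 * k) where
  E := X × (Fin (2 * k) → ℂ)
  proj := Prod.fst
  proj_cont := continuous_fst
  add e f := (e.1, e.2 + f.2)
  smul c e := (e.1, c • e.2)
  proj_add _ _ _ := rfl
  proj_smul _ _ := rfl
  locTriv _ := ⟨Set.univ, trivialLocHomeo X (Fin (2 * k) → ℂ), isOpen_univ, trivial,
    fun _ => rfl, fun _ _ _ _ => rfl, fun _ _ _ => rfl⟩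
  Θ :=
    { toFun := fun e => (τ e.1, qConj k e.2)
      invFun := fun e => (τ e.1, -(qConj k e.2))
      left_inv := fun e => by
        refine Prod.ext (hτ2 e.1) ?_
        show -(qConj k (qConj k e.2)) = e.2
        rw [qConj_qConj]; funext i; simp
      right_inv := fun e => by
        refine Prod.ext (hτ2 e.1) ?_
        show qConj k (-(qConj k e.2)) = e.2
        rw [qConj_neg, qConj_qConj]; funext i; simp
      continuous_toFun := (hτc.comp continuous_fst).prodMk
        ((continuous_qConj k).comp continuous_snd)
      continuous_invFun := (hτc.comp continuous_fst).prodMk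
        ((continuous_qConj k).comp continuous_snd).neg }
  proj_Θ _ := rfl
  Θ_add e f _ := Prod.ext rfl (qConj_add k e.2 f.2)
  Θ_smul c e := Prod.ext rfl (qConj_smul k c e.2)
  Θ_sq e := by
    refine Prod.ext (hτ2 e.1) ?_
    show qConj k (qConj k e.2) = (-1 : ℂ) • e.2
    rw [qConj_qConj]; funext i; simp

/-! ### ℤ/2-CW-complexes -/

/-- A (relative) ℤ/2-CW-structure on `(X, A)` with respect to the involution `τ`:
`X` is obtained from `A` by attaching free ℤ/2-cells `D^j × ℤ/2` (whose two halves
are interchanged by `τ`) and fixed cells `D^j` (on which `τ` acts trivially).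
The data is recorded via characteristic maps from closed unit disks, as usual:
the ℤ/2-orbits of open cells partition `X \ A`, the boundary of each cell is
attached to `A` and finitely many cells of strictly smaller dimension, and `X`
carries the weak topology. -/
structure EquivCWStructure (X : Type) [TopologicalSpace X] (τ : X → X) (A : Set X) :
    Type 1 where
  cellIdx : Type
  isFree : cellIdx → Prop
  cellDim : cellIdx → ℕ
  charMap : ∀ i, EuclideanSpace ℝ (Fin (cellDim i)) → X
  charMap_cont : ∀ i, ContinuousOn (charMap i) (Metric.closedBall 0 1)
  charMap_injOn : ∀ i, Set.InjOn (charMap i) (Metric.ball 0 1)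
  fixed_pointwise : ∀ i, ¬ isFree i →
    ∀ v ∈ Metric.closedBall (0 : EuclideanSpace ℝ (Fin (cellDim i))) 1,
      τ (charMap i v) = charMap i v
  free_halves_disjoint : ∀ i, isFree i →
    Disjoint (charMap i '' Metric.ball 0 1) (τ '' (charMap i '' Metric.ball 0 1))
  cover : ∀ x : X,
    x ∉ A ↔ ∃ i, x ∈ charMap i '' Metric.ball 0 1 ∪ τ '' (charMap i '' Metric.ball 0 1)
  cells_disjoint : Pairwise fun i j => Disjoint
    (charMap i '' Metric.ball 0 1 ∪ τ '' (charMap i '' Metric.ball 0 1))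
    (charMap j '' Metric.ball 0 1 ∪ τ '' (charMap j '' Metric.ball 0 1))
  boundary : ∀ i, ∃ J : Set cellIdx, J.Finite ∧ (∀ j ∈ J, cellDim j < cellDim i) ∧
    charMap i '' Metric.sphere 0 1 ⊆
      A ∪ ⋃ j ∈ J,
        (charMap j '' Metric.closedBall 0 1 ∪ τ '' (charMap j '' Metric.closedBall 0 1))
  weak_topology : ∀ S : Set X, IsClosed S ↔
    (IsClosed {a : ↥A | (a : X) ∈ S} ∧
      ∀ i, IsClosed {v : ↥(Metric.closedBall (0 : EuclideanSpace ℝ (Fin (cellDim i))) 1) |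
        charMap i v.val ∈ S})

/-! ### Real-scalar (ℝ-linear) vector bundles, for complexification statements -/

/-- A (locally trivial) real vector bundle of rank `k` over `X`, with `ℝ`-linear fibres. -/
structure RealScalarBundle (X : Type) [TopologicalSpace X] (k : ℕ) : Type 1 where
  E : Type
  [topE : TopologicalSpace E]
  proj : E → X
  proj_cont : Continuous proj
  add : E → E → E
  smul : ℝ → E → E
  proj_add : ∀ e f, proj e = proj f → proj (add e f) = proj e
  proj_smul : ∀ c e, proj (smul c e) = proj e
  locTriv : ∀ x : X, ∃ (U : Set X) (φ : ↥(proj ⁻¹' U) ≃ₜ ↥U × (Fin k → ℝ)),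
      IsOpen U ∧ x ∈ U ∧
      (∀ e : ↥(proj ⁻¹' U), ((φ e).1 : X) = proj e.val) ∧
      (∀ e f : ↥(proj ⁻¹' U), proj e.val = proj f.val →
        ∀ hmem : add e.val f.val ∈ proj ⁻¹' U,
          (φ ⟨add e.val f.val, hmem⟩).2 = (φ e).2 + (φ f).2) ∧
      (∀ (c : ℝ) (e : ↥(proj ⁻¹' U)), ∀ hmem : smul c e.val ∈ proj ⁻¹' U,
          (φ ⟨smul c e.val, hmem⟩).2 = c • (φ e).2)

attribute [instance] RealScalarBundle.topE

/-- Fibre product (total space of the direct sum) of two real-scalar bundles. -/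
abbrev fiberProdR {X : Type} [TopologicalSpace X] {k₁ k₂ : ℕ}
    (W₁ : RealScalarBundle X k₁) (W₂ : RealScalarBundle X k₂) : Type :=
  {p : W₁.E × W₂.E // W₁.proj p.1 = W₂.proj p.2}

/-! ### Subbundles cut out by idempotent matrix families -/

/-- Entrywise complex conjugation of a vector in `ℂ^n`. -/
def conjVec (n : ℕ) (v : Fin n → ℂ) : Fin n → ℂ := fun i => (starRingEnd ℂ) (v i)

/-- The total space of the fibrewise image of an idempotent family of matrices,
i.e. of the image subbundle of the corresponding trivial bundle. -/
abbrev idemTotal {X : Type} [TopologicalSpace X] {n : ℕ}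
    (p : X → Matrix (Fin n) (Fin n) ℂ) : Type :=
  {e : X × (Fin n → ℂ) // (p e.1).mulVec e.2 = e.2}

/-- An isomorphism between the image subbundles of two idempotent matrix families,
compatible with the involutive structure maps determined by `τ` and the fibrewise
anti-linear map `ΘV`. -/
structure IdemIso {X : Type} [TopologicalSpace X] {n : ℕ} (τ : X → X)
    (ΘV : (Fin n → ℂ) → (Fin n → ℂ)) (p q : X → Matrix (Fin n) (Fin n) ℂ) where
  g : idemTotal p ≃ₜ idemTotal q
  over' : ∀ e, (g e).val.1 = e.val.1
  map_add : ∀ (e f : idemTotal p), e.val.1 = f.val.1 →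
    ∀ hmem : (p e.val.1).mulVec (e.val.2 + f.val.2) = e.val.2 + f.val.2,
      (g ⟨(e.val.1, e.val.2 + f.val.2), hmem⟩).val.2 = (g e).val.2 + (g f).val.2
  map_smul : ∀ (c : ℂ) (e : idemTotal p),
    ∀ hmem : (p e.val.1).mulVec (c • e.val.2) = c • e.val.2,
      (g ⟨(e.val.1, c • e.val.2), hmem⟩).val.2 = c • (g e).val.2
  map_Θ : ∀ (e : idemTotal p),
    ∀ hmem : (p (τ e.val.1)).mulVec (ΘV e.val.2) = ΘV e.val.2,
      (g ⟨(τ e.val.1, ΘV e.val.2), hmem⟩).val = (τ (g e).val.1, ΘV (g e).val.2)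

/-- The block-diagonal sum of copies of `Θ₀ = [[0, -1], [1, 0]]`, as an `n × n`
complex matrix (used for even `n`). -/
def thetaMat (n : ℕ) : Matrix (Fin n) (Fin n) ℂ :=
  Matrix.of fun i j =>
    if i.val % 2 = 0 ∧ j.val = i.val + 1 then -1
    else if i.val % 2 = 1 ∧ i.val = j.val + 1 then 1 else 0

/-! ### The torus with complex conjugation -/

/-- The torus `𝕋^d = (S¹)^d ⊆ ℂ^d`. -/
abbrev Torus (d : ℕ) : Type := Fin d → ↥(Metric.sphere (0 : ℂ) 1)

/-- The involution of entrywise complex conjugation on the torus. -/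
def torusConj (d : ℕ) : Torus d → Torus d := fun z i =>
  ⟨(starRingEnd ℂ) (z i).val, by
    have h := (z i).property
    simp only [Metric.mem_sphere, dist_zero_right] at h ⊢
    simpa using h⟩

end

noncomputable section Aux

open Matrix Topology

namespace RVBAux

variable {X : Type} [TopologicalSpace X] {k : ℕ}

/-- Packaged chart data for a complex bundle. -/
structure BChart (V : CplxBundle X k) where
  U : Set X
  φ : ↥(V.proj ⁻¹' U) ≃ₜ ↥U × (Fin k → ℂ)
  openU : IsOpen U
  fst_eq : ∀ e, ((φ e).1 : X) = V.proj e.val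
  add_eq : ∀ e f : ↥(V.proj ⁻¹' U), V.proj e.val = V.proj f.val →
      ∀ hmem : V.add e.val f.val ∈ V.proj ⁻¹' U,
        (φ ⟨V.add e.val f.val, hmem⟩).2 = (φ e).2 + (φ f).2
  smul_eq : ∀ (c : ℂ) (e : ↥(V.proj ⁻¹' U)), ∀ hmem : V.smul c e.val ∈ V.proj ⁻¹' U,
        (φ ⟨V.smul c e.val, hmem⟩).2 = c • (φ e).2

/-- A chart around a given point. -/
def bchartAt (V : CplxBundle X k) (x : X) : {c : BChart V // x ∈ c.U} :=
  Classical.choice <| by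
    obtain ⟨U, φ, hopen, hx, h1, h2, h3⟩ := V.locTriv x
    exact ⟨⟨U, φ, hopen, h1, h2, h3⟩, hx⟩

namespace BChart

variable {V : CplxBundle X k} (c : BChart V)

def coordOf (e : V.E) (h : V.proj e ∈ c.U) : Fin k → ℂ := (c.φ ⟨e, h⟩).2

def emk (u : ↥c.U) (v : Fin k → ℂ) : V.E := (c.φ.symm (u, v)).val

lemma mem_mk (u : ↥c.U) (v : Fin k → ℂ) : V.proj (c.emk u v) ∈ c.U :=
  (c.φ.symm (u, v)).prop

lemma proj_mk (u : ↥c.U) (v : Fin k → ℂ) : V.proj (c.emk u v) = (u : X) := by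
  have h := (c.fst_eq (c.φ.symm (u, v))).symm
  rwa [Homeomorph.apply_symm_apply] at h

lemma coord_mk (u : ↥c.U) (v : Fin k → ℂ) (h : V.proj (c.emk u v) ∈ c.U) :
    c.coordOf (c.emk u v) h = v := by
  have : (⟨c.emk u v, h⟩ : ↥(V.proj ⁻¹' c.U)) = c.φ.symm (u, v) := Subtype.ext rfl
  rw [coordOf, this, Homeomorph.apply_symm_apply]

lemma phi_eq (e : ↥(V.proj ⁻¹' c.U)) :
    c.φ e = (⟨V.proj e.val, e.prop⟩, c.coordOf e.val e.prop) :=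
  Prod.ext (Subtype.ext (c.fst_eq e)) rfl

lemma mk_coord (e : V.E) (h : V.proj e ∈ c.U) :
    c.emk ⟨V.proj e, h⟩ (c.coordOf e h) = e := by
  have h2 : c.φ ⟨e, h⟩ = (⟨V.proj e, h⟩, c.coordOf e h) := c.phi_eq ⟨e, h⟩
  show (c.φ.symm (⟨V.proj e, h⟩, c.coordOf e h)).val = e
  rw [← h2, Homeomorph.symm_apply_apply]

lemma coord_congr {e f : V.E} (hef : e = f) (he : V.proj e ∈ c.U) (hf : V.proj f ∈ c.U) :
    c.coordOf e he = c.coordOf f hf := by subst hef; rfl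

lemma coord_inj {e f : V.E} (he : V.proj e ∈ c.U) (hf : V.proj f ∈ c.U)
    (hp : V.proj e = V.proj f) (hc : c.coordOf e he = c.coordOf f hf) : e = f := by
  calc e = c.emk ⟨V.proj e, he⟩ (c.coordOf e he) := (c.mk_coord e he).symm
    _ = c.emk ⟨V.proj f, hf⟩ (c.coordOf f hf) := by
        rw [hc]; exact congrArg (fun u => c.emk u (c.coordOf f hf)) (Subtype.ext hp)
    _ = f := c.mk_coord f hf

lemma coord_add {e f : V.E} (hp : V.proj e = V.proj f) (he : V.proj e ∈ c.U)
    (hf : V.proj f ∈ c.U) (ha : V.proj (V.add e f) ∈ c.U) :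
    c.coordOf (V.add e f) ha = c.coordOf e he + c.coordOf f hf :=
  c.add_eq ⟨e, he⟩ ⟨f, hf⟩ hp ha

lemma coord_smul (a : ℂ) (e : V.E) (he : V.proj e ∈ c.U)
    (hs : V.proj (V.smul a e) ∈ c.U) :
    c.coordOf (V.smul a e) hs = a • c.coordOf e he :=
  c.smul_eq a ⟨e, he⟩ hs

lemma continuous_coord : Continuous fun e : ↥(V.proj ⁻¹' c.U) => c.coordOf e.val e.prop :=
  continuous_snd.comp c.φ.continuous

end BChart

end RVBAux

end Aux

noncomputable section Aux2

open Matrix Topology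

namespace RVBAux

variable {X : Type} [TopologicalSpace X] {k : ℕ} (E : RealBundle X id k)

lemma proj_theta (e : E.E) : E.proj (E.Θ e) = E.proj e := by
  have := E.proj_Θ e; simpa using this

variable (c : BChart E.toCplxBundle)

/-- The fibrewise antilinear involution in chart coordinates. -/
def thf (u : ↥c.U) (v : Fin k → ℂ) : Fin k → ℂ :=
  c.coordOf (E.Θ (c.emk u v)) (by rw [proj_theta, c.proj_mk]; exact u.prop)

lemma mem_theta_emk (u : ↥c.U) (v : Fin k → ℂ) :
    E.proj (E.Θ (c.emk u v)) ∈ c.U := by rw [proj_theta, c.proj_mk]; exact u.prop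

lemma th_emk (u : ↥c.U) (v : Fin k → ℂ) :
    E.Θ (c.emk u v) = c.emk u (thf E c u v) := by
  refine c.coord_inj (mem_theta_emk E c u v) (c.mem_mk u _) ?_ ?_
  · rw [proj_theta, c.proj_mk, c.proj_mk]
  · rw [c.coord_mk]; rfl

lemma th_invol (u : ↥c.U) (v : Fin k → ℂ) : thf E c u (thf E c u v) = v := by
  have h1 : E.Θ (c.emk u (thf E c u v)) = c.emk u v := by
    rw [← th_emk, E.Θ_invol]
  have h2 := c.coord_congr h1 (mem_theta_emk E c u (thf E c u v)) (c.mem_mk u v)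
  rw [c.coord_mk] at h2
  exact h2

lemma emk_add (u : ↥c.U) (v w : Fin k → ℂ) :
    c.emk u (v + w) = E.add (c.emk u v) (c.emk u w) := by
  have hp : E.proj (c.emk u v) = E.proj (c.emk u w) := by rw [c.proj_mk, c.proj_mk]
  have hma : E.proj (E.add (c.emk u v) (c.emk u w)) ∈ c.U := by
    rw [E.proj_add _ _ hp, c.proj_mk]; exact u.prop
  refine c.coord_inj (c.mem_mk u _) hma ?_ ?_
  · rw [c.proj_mk, E.proj_add _ _ hp, c.proj_mk]
  · rw [c.coord_mk, c.coord_add hp (c.mem_mk u v) (c.mem_mk u w) hma,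
      c.coord_mk, c.coord_mk]

lemma emk_smul (u : ↥c.U) (a : ℂ) (v : Fin k → ℂ) :
    c.emk u (a • v) = E.smul a (c.emk u v) := by
  have hms : E.proj (E.smul a (c.emk u v)) ∈ c.U := by
    rw [E.proj_smul, c.proj_mk]; exact u.prop
  refine c.coord_inj (c.mem_mk u _) hms ?_ ?_
  · rw [c.proj_mk, E.proj_smul, c.proj_mk]
  · rw [c.coord_mk, c.coord_smul a _ (c.mem_mk u v) hms, c.coord_mk]

lemma th_add (u : ↥c.U) (v w : Fin k → ℂ) :
    thf E c u (v + w) = thf E c u v + thf E c u w := by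
  have hp : E.proj (c.emk u v) = E.proj (c.emk u w) := by rw [c.proj_mk, c.proj_mk]
  have h1 : E.Θ (c.emk u (v + w)) = c.emk u (thf E c u v + thf E c u w) := by
    rw [emk_add, E.Θ_add _ _ hp, th_emk, th_emk, ← emk_add]
  have h2 := c.coord_congr h1 (mem_theta_emk E c u (v + w)) (c.mem_mk u _)
  rw [c.coord_mk] at h2
  exact h2

lemma th_smul (u : ↥c.U) (a : ℂ) (v : Fin k → ℂ) :
    thf E c u (a • v) = (starRingEnd ℂ) a • thf E c u v := by
  have h1 : E.Θ (c.emk u (a • v)) = c.emk u ((starRingEnd ℂ) a • thf E c u v) := by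
    rw [emk_smul, E.Θ_smul, th_emk, ← emk_smul]
  have h2 := c.coord_congr h1 (mem_theta_emk E c u (a • v)) (c.mem_mk u _)
  rw [c.coord_mk] at h2
  exact h2

lemma th_cont : Continuous fun p : ↥c.U × (Fin k → ℂ) => thf E c p.1 p.2 := by
  exact continuous_snd.comp (c.φ.continuous.comp
    ((E.Θ.continuous.comp (continuous_subtype_val.comp c.φ.symm.continuous)).subtype_mk _))

variable (u₀ : ↥c.U)

/-- The fibrewise complex-linear comparison map `G_u = (1 + θ_u θ_{u₀})/2`. -/
def Glin (u : ↥c.U) : (Fin k → ℂ) →ₗ[ℂ] (Fin k → ℂ) where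
  toFun v := (2⁻¹ : ℂ) • (v + thf E c u (thf E c u₀ v))
  map_add' v w := by
    show (2⁻¹ : ℂ) • (v + w + thf E c u (thf E c u₀ (v + w)))
        = (2⁻¹ : ℂ) • (v + thf E c u (thf E c u₀ v)) + (2⁻¹ : ℂ) • (w + thf E c u (thf E c u₀ w))
    rw [th_add, th_add]
    funext i
    simp only [Pi.smul_apply, Pi.add_apply, smul_eq_mul]
    ring
  map_smul' a v := by
    show (2⁻¹ : ℂ) • (a • v + thf E c u (thf E c u₀ (a • v)))
        = a • ((2⁻¹ : ℂ) • (v + thf E c u (thf E c u₀ v)))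
    rw [th_smul, th_smul, Complex.conj_conj]
    funext i
    simp only [Pi.smul_apply, Pi.add_apply, smul_eq_mul, RingHom.id_apply]
    ring

def Gmat (u : ↥c.U) : Matrix (Fin k) (Fin k) ℂ := LinearMap.toMatrix' (Glin E c u₀ u)

lemma Gmat_mulVec (u : ↥c.U) (v : Fin k → ℂ) :
    (Gmat E c u₀ u).mulVec v = Glin E c u₀ u v := by
  rw [Gmat, ← Matrix.toLin'_apply, Matrix.toLin'_toMatrix']

lemma conj_two_inv : (starRingEnd ℂ) (2⁻¹ : ℂ) = 2⁻¹ := by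
  rw [map_inv₀, map_ofNat]

lemma intertwine (u : ↥c.U) (v : Fin k → ℂ) :
    thf E c u (Glin E c u₀ u v) = Glin E c u₀ u (thf E c u₀ v) := by
  show thf E c u ((2⁻¹ : ℂ) • (v + thf E c u (thf E c u₀ v)))
      = (2⁻¹ : ℂ) • (thf E c u₀ v + thf E c u (thf E c u₀ (thf E c u₀ v)))
  rw [th_smul, th_add, th_invol, th_invol, conj_two_inv, add_comm]

lemma Glin_self (v : Fin k → ℂ) : Glin E c u₀ u₀ v = v := by
  show (2⁻¹ : ℂ) • (v + thf E c u₀ (thf E c u₀ v)) = v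
  rw [th_invol]
  funext i
  simp only [Pi.smul_apply, Pi.add_apply, smul_eq_mul]
  ring

lemma det_Gmat_self : (Gmat E c u₀ u₀).det ≠ 0 := by
  have h : Glin E c u₀ u₀ = LinearMap.id := LinearMap.ext (Glin_self E c u₀)
  rw [Gmat, h, LinearMap.toMatrix'_id, Matrix.det_one]
  exact one_ne_zero

lemma cont_Gmat : Continuous fun u : ↥c.U => Gmat E c u₀ u := by
  apply continuous_pi; intro i; apply continuous_pi; intro j
  have : (fun u : ↥c.U => Gmat E c u₀ u i j)
      = fun u => (2⁻¹ : ℂ) * (((fun j' => if j' = j then (1:ℂ) else 0) i)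
        + thf E c u (thf E c u₀ (fun j' => if j' = j then 1 else 0)) i) := by
    funext u
    have hs : (Pi.single j (1:ℂ) : Fin k → ℂ) = fun j' => if j' = j then 1 else 0 := by
      funext j'; simp [Pi.single_apply]
    rw [Gmat, LinearMap.toMatrix'_apply, hs]
    rfl
  rw [this]
  refine continuous_const.mul (Continuous.add continuous_const ?_)
  exact (continuous_apply i).comp ((th_cont E c).comp
    (continuous_id.prodMk continuous_const))

end RVBAux

end Aux2

noncomputable section Aux3

open Matrix Topology

namespace RVBAux

variable {X : Type} [TopologicalSpace X] {k : ℕ} (E : RealBundle X id k)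
variable (c : BChart E.toCplxBundle) (u₀ : ↥c.U)

lemma th_zero (u : ↥c.U) : thf E c u 0 = 0 := by
  have := th_smul E c u 0 0
  rw [zero_smul, map_zero, zero_smul] at this
  exact this

lemma th_sum {ι : Type} (u : ↥c.U) (s : Finset ι) (f : ι → Fin k → ℂ) :
    thf E c u (∑ i ∈ s, f i) = ∑ i ∈ s, thf E c u (f i) := by
  classical
  induction s using Finset.induction_on with
  | empty => simpa using th_zero E c u
  | insert _ _ hni ih =>
      rw [Finset.sum_insert hni, Finset.sum_insert hni, th_add, ih]

/-- There is a `ℂ`-basis of `ℂ^k` consisting of `θ_{u₀}`-fixed vectors. -/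
lemma exists_fix_basis : ∃ B : Module.Basis (Fin k) ℂ (Fin k → ℂ), ∀ j, thf E c u₀ (B j) = B j := by
  classical
  set Fx : Set (Fin k → ℂ) := {v | thf E c u₀ v = v} with hFx
  have hspan : Submodule.span ℂ Fx = ⊤ := by
    rw [eq_top_iff]
    intro v _
    set a := (2⁻¹ : ℂ) • (v + thf E c u₀ v) with ha
    set b := ((2⁻¹ : ℂ) * Complex.I) • (thf E c u₀ v + (-1 : ℂ) • v) with hb
    have haf : a ∈ Fx := by
      show thf E c u₀ a = a
      rw [ha, th_smul, th_add, th_invol, conj_two_inv, add_comm]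
    have hbf : b ∈ Fx := by
      show thf E c u₀ b = b
      rw [hb, th_smul, th_add, th_invol, th_smul]
      funext i
      simp only [Pi.smul_apply, Pi.add_apply, smul_eq_mul, _root_.map_mul, map_inv₀,
        map_ofNat, Complex.conj_I, _root_.map_neg, _root_.map_one]
      ring
    have hv : v = a + Complex.I • b := by
      funext i
      rw [ha, hb]
      simp only [Pi.smul_apply, Pi.add_apply, smul_eq_mul]
      have hI := Complex.I_mul_I
      set t := thf E c u₀ v i
      set w := v i
      linear_combination (2⁻¹ * w - 2⁻¹ * t) * hI
    rw [hv]
    exact Submodule.add_mem _ (Submodule.subset_span haf)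
      (Submodule.smul_mem _ _ (Submodule.subset_span hbf))
  obtain ⟨s, hs_sub, hs_span, hs_li⟩ := exists_linearIndependent ℂ Fx
  have hs_top : ⊤ ≤ Submodule.span ℂ (Set.range (Subtype.val : s → (Fin k → ℂ))) := by
    rw [Subtype.range_coe, hs_span, hspan]
  let B0 : Module.Basis s ℂ (Fin k → ℂ) := Module.Basis.mk hs_li hs_top
  haveI : Fintype s := FiniteDimensional.fintypeBasisIndex B0
  have hcard : Fintype.card s = k := by
    have h1 := Module.finrank_eq_card_basis B0
    rw [Module.finrank_fin_fun] at h1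
    omega
  let B := B0.reindex (Fintype.equivFinOfCardEq hcard)
  refine ⟨B, fun j => ?_⟩
  have : B j ∈ Fx := by
    have h1 : B j = B0 ((Fintype.equivFinOfCardEq hcard).symm j) := Module.Basis.reindex_apply _ _ _
    rw [h1, Module.Basis.mk_apply]
    exact hs_sub ((Fintype.equivFinOfCardEq hcard).symm j).prop
  exact this

variable (B : Module.Basis (Fin k) ℂ (Fin k → ℂ))

def Lmap (r : Fin k → ℝ) : Fin k → ℂ := ∑ j, (r j : ℂ) • B j

def lmap (v : Fin k → ℂ) : Fin k → ℝ := fun j => (B.repr v j).re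

lemma repr_sum (cc : Fin k → ℂ) (j : Fin k) : B.repr (∑ i, cc i • B i) j = cc j := by
  classical
  rw [map_sum]
  simp only [_root_.map_smul, Module.Basis.repr_self]
  rw [Finsupp.coe_finset_sum, Finset.sum_apply]
  simp [Finsupp.single_apply]

lemma lmap_Lmap (r : Fin k → ℝ) : lmap B (Lmap B r) = r := by
  funext j
  rw [lmap, Lmap, repr_sum]
  exact Complex.ofReal_re _

lemma coords_real {v : Fin k → ℂ} (hB : ∀ j, thf E c u₀ (B j) = B j)
    (hv : thf E c u₀ v = v) (j : Fin k) : ((B.repr v j).re : ℂ) = B.repr v j := by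
  have hv2 : v = ∑ i, B.repr v i • B i := (B.sum_repr v).symm
  have hth : thf E c u₀ v = ∑ i, (starRingEnd ℂ) (B.repr v i) • B i := by
    conv_lhs => rw [hv2]
    rw [th_sum]
    congr 1
    funext i
    rw [th_smul, hB i]
  have heq : ∑ i, (starRingEnd ℂ) (B.repr v i) • B i = ∑ i, B.repr v i • B i := by
    rw [← hth, hv]; exact hv2
  have := congrArg (fun w => B.repr w j) heq
  rw [repr_sum, repr_sum] at this
  exact Complex.conj_eq_iff_re.mp this


lemma Lmap_lmap {v : Fin k → ℂ} (hB : ∀ j, thf E c u₀ (B j) = B j)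
    (hv : thf E c u₀ v = v) : Lmap B (lmap B v) = v := by
  conv_rhs => rw [← B.sum_repr v]
  rw [Lmap]
  congr 1
  funext i
  rw [lmap, coords_real E c u₀ B hB hv]

lemma Lmap_fix (hB : ∀ j, thf E c u₀ (B j) = B j) (r : Fin k → ℝ) :
    thf E c u₀ (Lmap B r) = Lmap B r := by
  rw [Lmap, th_sum]
  congr 1
  funext j
  rw [th_smul, hB j, Complex.conj_ofReal]

lemma lmap_add (v w : Fin k → ℂ) : lmap B (v + w) = lmap B v + lmap B w := by
  funext j; simp [lmap]

lemma lmap_real_smul (r : ℝ) (v : Fin k → ℂ) :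
    lmap B ((r : ℂ) • v) = r • lmap B v := by
  funext j
  show (B.repr ((r : ℂ) • v) j).re = r * (B.repr v j).re
  rw [_root_.map_smul, Finsupp.smul_apply, smul_eq_mul]
  simp

lemma Lmap_cont : Continuous (Lmap B) := by
  apply continuous_finset_sum
  intro j _
  exact (Complex.continuous_ofReal.comp (continuous_apply j)).smul continuous_const

lemma lmap_cont : Continuous (lmap B) := by
  apply continuous_pi
  intro j
  have h1 : Continuous fun v : Fin k → ℂ => B.repr v j := by
    have : (fun v : Fin k → ℂ => B.repr v j) = fun v => B.coord j v := by
      funext v; rw [Module.Basis.coord_apply]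
    rw [this]
    exact LinearMap.continuous_of_finiteDimensional _
  exact Complex.continuous_re.comp h1

end RVBAux

end Aux3

noncomputable section Aux4

open Matrix Topology Classical

namespace RVBAux

variable {X : Type} [TopologicalSpace X] {k : ℕ} (E : RealBundle X id k)
variable (c : BChart E.toCplxBundle) (u₀ : ↥c.U)

/-- Fibrewise addition on the fixed-point set (junk value off the diagonal). -/
def fixAdd (e f : {e : E.E // E.Θ e = e}) : {e : E.E // E.Θ e = e} :=
  if h : E.proj e.val = E.proj f.val then
    ⟨E.add e.val f.val, by rw [E.Θ_add _ _ h, e.prop, f.prop]⟩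
  else e

/-- Fibrewise real scalar multiplication on the fixed-point set. -/
def fixSmul (r : ℝ) (e : {e : E.E // E.Θ e = e}) : {e : E.E // E.Θ e = e} :=
  ⟨E.smul (r : ℂ) e.val, by rw [E.Θ_smul, Complex.conj_ofReal, e.prop]⟩

/-- The open set over which the fixed-point set is trivialized. -/
def fixU : Set X := {y | ∃ h : y ∈ c.U, (Gmat E c u₀ ⟨y, h⟩).det ≠ 0}

lemma fixU_sub {y : X} (hy : y ∈ fixU E c u₀) : y ∈ c.U := hy.choose

lemma fixU_det (u : ↥c.U) (hu : (u : X) ∈ fixU E c u₀) : (Gmat E c u₀ u).det ≠ 0 := by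
  have h := hu.choose_spec
  have h2 : (⟨(u : X), hu.choose⟩ : ↥c.U) = u := Subtype.ext rfl
  rwa [h2] at h

lemma fixU_open : IsOpen (fixU E c u₀) := by
  have hcont : Continuous fun u : ↥c.U => (Gmat E c u₀ u).det :=
    (cont_Gmat E c u₀).matrix_det
  have h1 : IsOpen {u : ↥c.U | (Gmat E c u₀ u).det ≠ 0} :=
    isOpen_compl_singleton.preimage hcont
  have h2 : fixU E c u₀ = Subtype.val '' {u : ↥c.U | (Gmat E c u₀ u).det ≠ 0} := by
    ext y
    constructor
    · rintro ⟨h, hd⟩; exact ⟨⟨y, h⟩, hd, rfl⟩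
    · rintro ⟨u, hd, rfl⟩
      exact ⟨u.prop, by rwa [show (⟨(u : X), u.prop⟩ : ↥c.U) = u from Subtype.ext rfl]⟩
  rw [h2]
  exact c.openU.isOpenMap_subtype_val _ h1

lemma mem_fixU_self : (u₀ : X) ∈ fixU E c u₀ :=
  ⟨u₀.prop, by rw [show (⟨(u₀ : X), u₀.prop⟩ : ↥c.U) = u₀ from Subtype.ext rfl]
               exact det_Gmat_self E c u₀⟩

variable (B : Module.Basis (Fin k) ℂ (Fin k → ℂ))

/-- Forward direction of the fixed-point chart. -/
def fwdF (e : ↥((fun e : {e : E.E // E.Θ e = e} => E.proj e.val) ⁻¹' fixU E c u₀)) :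
    ↥(fixU E c u₀) × (Fin k → ℝ) :=
  (⟨E.proj e.val.val, e.prop⟩,
    lmap B ((Gmat E c u₀ ⟨E.proj e.val.val, fixU_sub E c u₀ e.prop⟩)⁻¹ *ᵥ
      c.coordOf e.val.val (fixU_sub E c u₀ e.prop)))

/-- Backward direction of the fixed-point chart. -/
def bwdF (hB : ∀ j, thf E c u₀ (B j) = B j) (p : ↥(fixU E c u₀) × (Fin k → ℝ)) :
    ↥((fun e : {e : E.E // E.Θ e = e} => E.proj e.val) ⁻¹' fixU E c u₀) :=
  ⟨⟨c.emk ⟨p.1.val, fixU_sub E c u₀ p.1.prop⟩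
      ((Gmat E c u₀ ⟨p.1.val, fixU_sub E c u₀ p.1.prop⟩) *ᵥ Lmap B p.2), by
    set u : ↥c.U := ⟨p.1.val, fixU_sub E c u₀ p.1.prop⟩
    have hw : thf E c u ((Gmat E c u₀ u) *ᵥ Lmap B p.2)
        = (Gmat E c u₀ u) *ᵥ Lmap B p.2 := by
      rw [Gmat_mulVec, intertwine, Lmap_fix E c u₀ B hB, ← Gmat_mulVec]
    rw [th_emk, hw]⟩, by
    show E.proj (c.emk _ _) ∈ fixU E c u₀
    rw [c.proj_mk]
    exact p.1.prop⟩

lemma fix_coord (e : E.E) (hfix : E.Θ e = e) (h : E.proj e ∈ c.U) :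
    thf E c ⟨E.proj e, h⟩ (c.coordOf e h) = c.coordOf e h := by
  have h1 : c.emk ⟨E.proj e, h⟩ (c.coordOf e h) = e := c.mk_coord e h
  show c.coordOf (E.Θ (c.emk ⟨E.proj e, h⟩ (c.coordOf e h))) _ = c.coordOf e h
  exact c.coord_congr (by rw [h1, hfix]) _ h

lemma mulVec_inv_cancel (u : ↥c.U) (hd : (Gmat E c u₀ u).det ≠ 0) (v : Fin k → ℂ) :
    (Gmat E c u₀ u) *ᵥ ((Gmat E c u₀ u)⁻¹ *ᵥ v) = v := by
  rw [Matrix.mulVec_mulVec, Matrix.mul_nonsing_inv _ (isUnit_iff_ne_zero.mpr hd),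
    Matrix.one_mulVec]

lemma inv_mulVec_cancel (u : ↥c.U) (hd : (Gmat E c u₀ u).det ≠ 0) (v : Fin k → ℂ) :
    (Gmat E c u₀ u)⁻¹ *ᵥ ((Gmat E c u₀ u) *ᵥ v) = v := by
  rw [Matrix.mulVec_mulVec, Matrix.nonsing_inv_mul _ (isUnit_iff_ne_zero.mpr hd),
    Matrix.one_mulVec]

lemma bwd_fwd (hB : ∀ j, thf E c u₀ (B j) = B j)
    (e : ↥((fun e : {e : E.E // E.Θ e = e} => E.proj e.val) ⁻¹' fixU E c u₀)) :
    bwdF E c u₀ B hB (fwdF E c u₀ B e) = e := by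
  apply Subtype.ext
  apply Subtype.ext
  have hU : E.proj e.val.val ∈ c.U := fixU_sub E c u₀ e.prop
  set u : ↥c.U := ⟨E.proj e.val.val, hU⟩ with hu
  set v : Fin k → ℂ := c.coordOf e.val.val hU with hv0
  have hd : (Gmat E c u₀ u).det ≠ 0 := fixU_det E c u₀ u e.prop
  show c.emk u ((Gmat E c u₀ u) *ᵥ Lmap B (lmap B ((Gmat E c u₀ u)⁻¹ *ᵥ v))) = e.val.val
  have hv : thf E c u v = v := fix_coord E c e.val.val e.val.prop hU
  set z : Fin k → ℂ := (Gmat E c u₀ u)⁻¹ *ᵥ v with hz0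
  have hGz : (Gmat E c u₀ u) *ᵥ z = v := mulVec_inv_cancel E c u₀ u hd v
  have h1 : (Gmat E c u₀ u) *ᵥ thf E c u₀ z = v := by
    rw [Gmat_mulVec, ← intertwine, ← Gmat_mulVec, hGz, hv]
  have hzfix : thf E c u₀ z = z := by
    have h2 := congrArg (fun w => (Gmat E c u₀ u)⁻¹ *ᵥ w) h1
    rw [inv_mulVec_cancel E c u₀ u hd] at h2
    rw [h2, hz0]
  rw [Lmap_lmap E c u₀ B hB hzfix, hGz]
  exact c.mk_coord _ hU

lemma fwd_bwd (hB : ∀ j, thf E c u₀ (B j) = B j) (p : ↥(fixU E c u₀) × (Fin k → ℝ)) :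
    fwdF E c u₀ B (bwdF E c u₀ B hB p) = p := by
  set u : ↥c.U := ⟨p.1.val, fixU_sub E c u₀ p.1.prop⟩ with hu
  set w : Fin k → ℂ := (Gmat E c u₀ u) *ᵥ Lmap B p.2 with hw
  have hd : (Gmat E c u₀ u).det ≠ 0 := fixU_det E c u₀ u p.1.prop
  have hmem' : E.proj (c.emk u w) ∈ fixU E c u₀ := by rw [c.proj_mk]; exact p.1.prop
  have hUm : E.proj (c.emk u w) ∈ c.U := fixU_sub E c u₀ hmem'
  apply Prod.ext
  · exact Subtype.ext (c.proj_mk u w)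
  · show lmap B ((Gmat E c u₀ ⟨E.proj (c.emk u w), hUm⟩)⁻¹ *ᵥ
      c.coordOf (c.emk u w) hUm) = p.2
    have hu2 : (⟨E.proj (c.emk u w), hUm⟩ : ↥c.U) = u := Subtype.ext (c.proj_mk u w)
    rw [c.coord_mk u w hUm, hu2, inv_mulVec_cancel E c u₀ u hd, lmap_Lmap]

lemma continuous_mulVec {α : Type} [TopologicalSpace α] {M : α → Matrix (Fin k) (Fin k) ℂ}
    {v : α → Fin k → ℂ} (hM : Continuous M) (hv : Continuous v) :
    Continuous fun a => (M a) *ᵥ (v a) := by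
  apply continuous_pi; intro i
  have h : (fun a => ((M a) *ᵥ (v a)) i) = fun a => ∑ j, M a i j * v a j := by
    funext a; rw [Matrix.mulVec, dotProduct]
  rw [h]
  exact continuous_finset_sum _ fun j _ =>
    (((continuous_apply j).comp ((continuous_apply i).comp hM)).mul
      ((continuous_apply j).comp hv))

lemma cont_fwd : Continuous (fwdF E c u₀ B) := by
  apply Continuous.prodMk
  · exact (E.proj_cont.comp (continuous_subtype_val.comp continuous_subtype_val)).subtype_mk _
  · refine (lmap_cont B).comp ?_
    have hu : Continuous fun e : ↥((fun e : {e : E.E // E.Θ e = e} => E.proj e.val) ⁻¹' fixU E c u₀) =>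
        (⟨E.proj e.val.val, fixU_sub E c u₀ e.prop⟩ : ↥c.U) :=
      (E.proj_cont.comp (continuous_subtype_val.comp continuous_subtype_val)).subtype_mk _
    have hG : Continuous fun e : ↥((fun e : {e : E.E // E.Θ e = e} => E.proj e.val) ⁻¹' fixU E c u₀) =>
        Gmat E c u₀ ⟨E.proj e.val.val, fixU_sub E c u₀ e.prop⟩ := (cont_Gmat E c u₀).comp hu
    have hdet : ∀ e : ↥((fun e : {e : E.E // E.Θ e = e} => E.proj e.val) ⁻¹' fixU E c u₀),
        (Gmat E c u₀ ⟨E.proj e.val.val, fixU_sub E c u₀ e.prop⟩).det ≠ 0 :=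
      fun e => fixU_det E c u₀ _ e.prop
    apply continuous_mulVec
    · have heq : (fun e : ↥((fun e : {e : E.E // E.Θ e = e} => E.proj e.val) ⁻¹' fixU E c u₀) =>
          (Gmat E c u₀ ⟨E.proj e.val.val, fixU_sub E c u₀ e.prop⟩)⁻¹)
          = fun e => ((Gmat E c u₀ ⟨E.proj e.val.val, fixU_sub E c u₀ e.prop⟩).det)⁻¹ •
              (Gmat E c u₀ ⟨E.proj e.val.val, fixU_sub E c u₀ e.prop⟩).adjugate := by
        funext e
        rw [Matrix.inv_def, Ring.inverse_eq_inv]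
      rw [heq]
      exact (hG.matrix_det.inv₀ hdet).smul hG.matrix_adjugate
    · exact continuous_snd.comp (c.φ.continuous.comp
        ((continuous_subtype_val.comp continuous_subtype_val).subtype_mk _))

lemma cont_bwd (hB : ∀ j, thf E c u₀ (B j) = B j) : Continuous (bwdF E c u₀ B hB) := by
  apply Continuous.subtype_mk
  apply Continuous.subtype_mk
  have hu : Continuous fun p : ↥(fixU E c u₀) × (Fin k → ℝ) =>
      (⟨p.1.val, fixU_sub E c u₀ p.1.prop⟩ : ↥c.U) :=
    (continuous_subtype_val.comp continuous_fst).subtype_mk _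
  have hw : Continuous fun p : ↥(fixU E c u₀) × (Fin k → ℝ) =>
      (Gmat E c u₀ ⟨p.1.val, fixU_sub E c u₀ p.1.prop⟩) *ᵥ Lmap B p.2 :=
    continuous_mulVec ((cont_Gmat E c u₀).comp hu) ((Lmap_cont B).comp continuous_snd)
  exact continuous_subtype_val.comp (c.φ.symm.continuous.comp (hu.prodMk hw))

end RVBAux

end Aux4

noncomputable section Aux5

open Matrix Topology Classical

namespace RVBAux

variable {X : Type} [TopologicalSpace X] {k : ℕ} (E : RealBundle X id k)

lemma fix_locTriv (x : X) :
    ∃ (U : Set X)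
      (φ : ↥((fun e : {e : E.E // E.Θ e = e} => E.proj e.val) ⁻¹' U) ≃ₜ ↥U × (Fin k → ℝ)),
      IsOpen U ∧ x ∈ U ∧
      (∀ e : ↥((fun e : {e : E.E // E.Θ e = e} => E.proj e.val) ⁻¹' U),
        ((φ e).1 : X) = E.proj e.val.val) ∧
      (∀ e f : ↥((fun e : {e : E.E // E.Θ e = e} => E.proj e.val) ⁻¹' U),
        E.proj e.val.val = E.proj f.val.val →
        ∀ hmem : fixAdd E e.val f.val ∈ (fun e : {e : E.E // E.Θ e = e} => E.proj e.val) ⁻¹' U,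
          (φ ⟨fixAdd E e.val f.val, hmem⟩).2 = (φ e).2 + (φ f).2) ∧
      (∀ (r : ℝ) (e : ↥((fun e : {e : E.E // E.Θ e = e} => E.proj e.val) ⁻¹' U)),
        ∀ hmem : fixSmul E r e.val ∈ (fun e : {e : E.E // E.Θ e = e} => E.proj e.val) ⁻¹' U,
          (φ ⟨fixSmul E r e.val, hmem⟩).2 = r • (φ e).2) := by
  obtain ⟨c, hx⟩ := bchartAt E.toCplxBundle x
  set u₀ : ↥c.U := ⟨x, hx⟩ with hu₀
  obtain ⟨B, hB⟩ := exists_fix_basis E c u₀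
  refine ⟨fixU E c u₀,
    ⟨⟨fwdF E c u₀ B, bwdF E c u₀ B hB, bwd_fwd E c u₀ B hB, fwd_bwd E c u₀ B hB⟩,
      cont_fwd E c u₀ B, cont_bwd E c u₀ B hB⟩,
    fixU_open E c u₀, mem_fixU_self E c u₀, fun e => rfl, ?_, ?_⟩
  · -- additivity
    intro e f h hmem
    have hval : (fixAdd E e.val f.val).val = E.add e.val.val f.val.val := by
      unfold fixAdd; rw [dif_pos h]
    have hfixpf : E.Θ (E.add e.val.val f.val.val) = E.add e.val.val f.val.val := by
      rw [← hval]; exact (fixAdd E e.val f.val).prop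
    have hmem' : E.proj (E.add e.val.val f.val.val) ∈ fixU E c u₀ := by
      rw [← hval]; exact hmem
    have hel : (⟨fixAdd E e.val f.val, hmem⟩ :
        ↥((fun e : {e : E.E // E.Θ e = e} => E.proj e.val) ⁻¹' fixU E c u₀))
        = ⟨⟨E.add e.val.val f.val.val, hfixpf⟩, hmem'⟩ :=
      Subtype.ext (Subtype.ext hval)
    rw [hel]
    show lmap B ((Gmat E c u₀ ⟨E.proj (E.add e.val.val f.val.val),
        fixU_sub E c u₀ hmem'⟩)⁻¹ *ᵥ
        c.coordOf (E.add e.val.val f.val.val) (fixU_sub E c u₀ hmem')) = _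
    have hu1 : (⟨E.proj (E.add e.val.val f.val.val), fixU_sub E c u₀ hmem'⟩ : ↥c.U)
        = ⟨E.proj e.val.val, fixU_sub E c u₀ e.prop⟩ := Subtype.ext (E.proj_add _ _ h)
    have hu2 : (⟨E.proj f.val.val, fixU_sub E c u₀ f.prop⟩ : ↥c.U)
        = ⟨E.proj e.val.val, fixU_sub E c u₀ e.prop⟩ := Subtype.ext h.symm
    rw [c.coord_add h (fixU_sub E c u₀ e.prop) (fixU_sub E c u₀ f.prop)
        (fixU_sub E c u₀ hmem'), hu1, Matrix.mulVec_add, lmap_add]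
    show _ = lmap B ((Gmat E c u₀ ⟨E.proj e.val.val, fixU_sub E c u₀ e.prop⟩)⁻¹ *ᵥ
        c.coordOf e.val.val (fixU_sub E c u₀ e.prop))
      + lmap B ((Gmat E c u₀ ⟨E.proj f.val.val, fixU_sub E c u₀ f.prop⟩)⁻¹ *ᵥ
        c.coordOf f.val.val (fixU_sub E c u₀ f.prop))
    rw [hu2]
  · -- scalar multiplication
    intro r e hmem
    have hval : (fixSmul E r e.val).val = E.smul (r : ℂ) e.val.val := rfl
    have hfixpf : E.Θ (E.smul (r : ℂ) e.val.val) = E.smul (r : ℂ) e.val.val := by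
      rw [← hval]; exact (fixSmul E r e.val).prop
    have hmem' : E.proj (E.smul (r : ℂ) e.val.val) ∈ fixU E c u₀ := hmem
    have hel : (⟨fixSmul E r e.val, hmem⟩ :
        ↥((fun e : {e : E.E // E.Θ e = e} => E.proj e.val) ⁻¹' fixU E c u₀))
        = ⟨⟨E.smul (r : ℂ) e.val.val, hfixpf⟩, hmem'⟩ :=
      Subtype.ext (Subtype.ext hval)
    rw [hel]
    show lmap B ((Gmat E c u₀ ⟨E.proj (E.smul (r : ℂ) e.val.val),
        fixU_sub E c u₀ hmem'⟩)⁻¹ *ᵥ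
        c.coordOf (E.smul (r : ℂ) e.val.val) (fixU_sub E c u₀ hmem')) = _
    have hu1 : (⟨E.proj (E.smul (r : ℂ) e.val.val), fixU_sub E c u₀ hmem'⟩ : ↥c.U)
        = ⟨E.proj e.val.val, fixU_sub E c u₀ e.prop⟩ := Subtype.ext (E.proj_smul _ _)
    rw [c.coord_smul (r : ℂ) e.val.val (fixU_sub E c u₀ e.prop) (fixU_sub E c u₀ hmem'),
      hu1, Matrix.mulVec_smul, lmap_real_smul]
    rfl

/-- The fixed-point real bundle `E^Θ`. -/
def fixBundle : RealScalarBundle X k where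
  E := {e : E.E // E.Θ e = e}
  proj e := E.proj e.val
  proj_cont := E.proj_cont.comp continuous_subtype_val
  add := fixAdd E
  smul := fixSmul E
  proj_add e f h := by
    show E.proj (fixAdd E e f).val = E.proj e.val
    unfold fixAdd; rw [dif_pos h]
    exact E.proj_add _ _ h
  proj_smul r e := E.proj_smul _ _
  locTriv := fix_locTriv E

end RVBAux

end Aux5

noncomputable section Aux6

open Matrix Topology Classical

namespace RVBAux

variable {X : Type} [TopologicalSpace X] {k : ℕ} (E : RealBundle X id k)

lemma proj_eΘ (e : E.E) : E.proj e = E.proj (E.Θ e) := (proj_theta E e).symm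

/-- The real part `(e + Θe)/2` of a vector. -/
def aPart (e : E.E) : E.E := E.smul 2⁻¹ (E.add e (E.Θ e))

/-- The imaginary part `(Θe - e)·(i/2)` of a vector. -/
def bPart (e : E.E) : E.E :=
  E.smul (2⁻¹ * Complex.I) (E.add (E.Θ e) (E.smul (-1) e))

lemma proj_aPart (e : E.E) : E.proj (aPart E e) = E.proj e := by
  show E.proj (E.smul _ _) = _
  rw [E.proj_smul, E.proj_add _ _ (proj_eΘ E e)]

lemma proj_bPart (e : E.E) : E.proj (bPart E e) = E.proj e := by
  show E.proj (E.smul _ _) = _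
  rw [E.proj_smul, E.proj_add _ _ (by rw [proj_theta, E.proj_smul]), proj_theta]

lemma add_comm' (e f : E.E) (h : E.proj e = E.proj f) : E.add e f = E.add f e := by
  obtain ⟨c, hx⟩ := bchartAt E.toCplxBundle (E.proj e)
  have hU : E.proj e ∈ c.U := hx
  have hUf : E.proj f ∈ c.U := h ▸ hU
  have h1 : E.proj (E.add e f) ∈ c.U := by rw [E.proj_add _ _ h]; exact hU
  have h2 : E.proj (E.add f e) ∈ c.U := by rw [E.proj_add _ _ h.symm]; exact hUf
  refine c.coord_inj h1 h2 (by rw [E.proj_add _ _ h, E.proj_add _ _ h.symm, h]) ?_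
  rw [c.coord_add h hU hUf h1, c.coord_add h.symm hUf hU h2, add_comm]

lemma smul_smul' (a b : ℂ) (e : E.E) : E.smul a (E.smul b e) = E.smul (a * b) e := by
  obtain ⟨c, hx⟩ := bchartAt E.toCplxBundle (E.proj e)
  have hU : E.proj e ∈ c.U := hx
  have h1 : E.proj (E.smul b e) ∈ c.U := by rw [E.proj_smul]; exact hU
  have h2 : E.proj (E.smul a (E.smul b e)) ∈ c.U := by rw [E.proj_smul, E.proj_smul]; exact hU
  have h3 : E.proj (E.smul (a * b) e) ∈ c.U := by rw [E.proj_smul]; exact hU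
  refine c.coord_inj h2 h3 (by rw [E.proj_smul, E.proj_smul, E.proj_smul]) ?_
  rw [c.coord_smul a _ h1 h2, c.coord_smul b _ hU h1, c.coord_smul (a * b) _ hU h3,
    smul_smul]

lemma theta_aPart (e : E.E) : E.Θ (aPart E e) = aPart E e := by
  have h1 : E.Θ (aPart E e) = E.smul 2⁻¹ (E.add (E.Θ e) e) := by
    show E.Θ (E.smul 2⁻¹ (E.add e (E.Θ e))) = _
    rw [E.Θ_smul, E.Θ_add _ _ (proj_eΘ E e), E.Θ_invol, conj_two_inv]
  rw [h1, add_comm' E (E.Θ e) e (proj_theta E e)]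
  rfl

lemma conj_neg_one : (starRingEnd ℂ) (-1 : ℂ) = -1 := by
  rw [_root_.map_neg, _root_.map_one]

lemma conj_halfI : (starRingEnd ℂ) (2⁻¹ * Complex.I) = -(2⁻¹ * Complex.I) := by
  rw [_root_.map_mul, conj_two_inv, Complex.conj_I]
  ring

lemma theta_bPart (e : E.E) : E.Θ (bPart E e) = bPart E e := by
  have hp : E.proj (E.Θ e) = E.proj (E.smul (-1) e) := by
    rw [proj_theta, E.proj_smul]
  have h1 : E.Θ (bPart E e) = E.smul (-(2⁻¹ * Complex.I)) (E.add e (E.smul (-1) (E.Θ e))) := by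
    show E.Θ (E.smul (2⁻¹ * Complex.I) (E.add (E.Θ e) (E.smul (-1) e))) = _
    rw [E.Θ_smul, E.Θ_add _ _ hp, E.Θ_invol, E.Θ_smul, conj_halfI, conj_neg_one]
  rw [h1]
  show E.smul (-(2⁻¹ * Complex.I)) (E.add e (E.smul (-1) (E.Θ e)))
      = E.smul (2⁻¹ * Complex.I) (E.add (E.Θ e) (E.smul (-1) e))
  -- chart identity
  obtain ⟨c, hx⟩ := bchartAt E.toCplxBundle (E.proj e)
  have hU : E.proj e ∈ c.U := hx
  have hUθ : E.proj (E.Θ e) ∈ c.U := by rw [proj_theta]; exact hU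
  have hm1 : E.proj (E.smul (-1) (E.Θ e)) ∈ c.U := by rw [E.proj_smul]; exact hUθ
  have hm2 : E.proj (E.smul (-1) e) ∈ c.U := by rw [E.proj_smul]; exact hU
  have hp1 : E.proj e = E.proj (E.smul (-1) (E.Θ e)) := by rw [E.proj_smul, proj_theta]
  have hp2 : E.proj (E.Θ e) = E.proj (E.smul (-1) e) := hp
  have ha1 : E.proj (E.add e (E.smul (-1) (E.Θ e))) ∈ c.U := by
    rw [E.proj_add _ _ hp1]; exact hU
  have ha2 : E.proj (E.add (E.Θ e) (E.smul (-1) e)) ∈ c.U := by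
    rw [E.proj_add _ _ hp2]; exact hUθ
  have hs1 : E.proj (E.smul (-(2⁻¹ * Complex.I)) (E.add e (E.smul (-1) (E.Θ e)))) ∈ c.U := by
    rw [E.proj_smul]; exact ha1
  have hs2 : E.proj (E.smul (2⁻¹ * Complex.I) (E.add (E.Θ e) (E.smul (-1) e))) ∈ c.U := by
    rw [E.proj_smul]; exact ha2
  refine c.coord_inj hs1 hs2 (by rw [E.proj_smul, E.proj_smul, E.proj_add _ _ hp1,
    E.proj_add _ _ hp2, proj_theta]) ?_
  rw [c.coord_smul _ _ ha1 hs1, c.coord_smul _ _ ha2 hs2,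
    c.coord_add hp1 hU hm1 ha1, c.coord_add hp2 hUθ hm2 ha2,
    c.coord_smul _ _ hUθ hm1, c.coord_smul _ _ hU hm2]
  funext i
  simp only [Pi.smul_apply, Pi.add_apply, smul_eq_mul, neg_mul]
  ring

lemma theta_g (a b : E.E) (h : E.proj a = E.proj b) (ha : E.Θ a = a) (hb : E.Θ b = b) :
    E.Θ (E.add a (E.smul Complex.I b))
      = E.add a (E.smul Complex.I (E.smul (-1 : ℂ) b)) := by
  rw [E.Θ_add _ _ (by rw [E.proj_smul]; exact h), ha, E.Θ_smul, hb, Complex.conj_I,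
    smul_smul' E Complex.I (-1) b, show Complex.I * (-1) = -Complex.I by ring]

lemma aPart_g (a b : E.E) (h : E.proj a = E.proj b) (ha : E.Θ a = a) (hb : E.Θ b = b) :
    aPart E (E.add a (E.smul Complex.I b)) = a := by
  set e := E.add a (E.smul Complex.I b) with he0
  have hpsb : E.proj a = E.proj (E.smul Complex.I b) := by rw [E.proj_smul]; exact h
  have hpe : E.proj e = E.proj a := E.proj_add _ _ hpsb
  have hθe : E.Θ e = E.add a (E.smul (-Complex.I) b) := by
    rw [he0, E.Θ_add _ _ hpsb, ha, E.Θ_smul, hb, Complex.conj_I]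
  obtain ⟨c, hx⟩ := bchartAt E.toCplxBundle (E.proj a)
  have hUa : E.proj a ∈ c.U := hx
  have hUb : E.proj b ∈ c.U := h ▸ hUa
  have hUsb : E.proj (E.smul Complex.I b) ∈ c.U := by rw [E.proj_smul]; exact hUb
  have hUsb' : E.proj (E.smul (-Complex.I) b) ∈ c.U := by rw [E.proj_smul]; exact hUb
  have hUe : E.proj e ∈ c.U := by rw [hpe]; exact hUa
  have hUθe : E.proj (E.Θ e) ∈ c.U := by rw [proj_theta]; exact hUe
  have hpθ : E.proj e = E.proj (E.Θ e) := proj_eΘ E e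
  have hUadd : E.proj (E.add e (E.Θ e)) ∈ c.U := by rw [E.proj_add _ _ hpθ]; exact hUe
  have hUap : E.proj (aPart E e) ∈ c.U := by rw [proj_aPart]; exact hUe
  refine c.coord_inj hUap hUa (by rw [proj_aPart]; exact hpe) ?_
  have hca : c.coordOf (aPart E e) hUap
      = (2⁻¹ : ℂ) • (c.coordOf e hUe + c.coordOf (E.Θ e) hUθe) := by
    show c.coordOf (E.smul 2⁻¹ (E.add e (E.Θ e))) hUap = _
    rw [c.coord_smul _ _ hUadd hUap, c.coord_add hpθ hUe hUθe hUadd]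
  have hce : c.coordOf e hUe = c.coordOf a hUa + Complex.I • c.coordOf b hUb := by
    have := c.coord_add hpsb hUa hUsb hUe
    rw [this, c.coord_smul _ _ hUb hUsb]
  have hcθ : c.coordOf (E.Θ e) hUθe
      = c.coordOf a hUa + (-Complex.I) • c.coordOf b hUb := by
    have h1 : E.proj (E.add a (E.smul (-Complex.I) b)) ∈ c.U := by
      rw [E.proj_add _ _ (by rw [E.proj_smul]; exact h)]; exact hUa
    rw [c.coord_congr hθe hUθe h1,
      c.coord_add (by rw [E.proj_smul]; exact h) hUa hUsb' h1,
      c.coord_smul _ _ hUb hUsb']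
  rw [hca, hce, hcθ]
  funext i
  simp only [Pi.smul_apply, Pi.add_apply, smul_eq_mul, neg_mul]
  ring

lemma bPart_g (a b : E.E) (h : E.proj a = E.proj b) (ha : E.Θ a = a) (hb : E.Θ b = b) :
    bPart E (E.add a (E.smul Complex.I b)) = b := by
  set e := E.add a (E.smul Complex.I b) with he0
  have hpsb : E.proj a = E.proj (E.smul Complex.I b) := by rw [E.proj_smul]; exact h
  have hpe : E.proj e = E.proj a := E.proj_add _ _ hpsb
  have hθe : E.Θ e = E.add a (E.smul (-Complex.I) b) := by
    rw [he0, E.Θ_add _ _ hpsb, ha, E.Θ_smul, hb, Complex.conj_I]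
  obtain ⟨c, hx⟩ := bchartAt E.toCplxBundle (E.proj a)
  have hUa : E.proj a ∈ c.U := hx
  have hUb : E.proj b ∈ c.U := h ▸ hUa
  have hUsb : E.proj (E.smul Complex.I b) ∈ c.U := by rw [E.proj_smul]; exact hUb
  have hUsb' : E.proj (E.smul (-Complex.I) b) ∈ c.U := by rw [E.proj_smul]; exact hUb
  have hUe : E.proj e ∈ c.U := by rw [hpe]; exact hUa
  have hUθe : E.proj (E.Θ e) ∈ c.U := by rw [proj_theta]; exact hUe
  have hUme : E.proj (E.smul (-1) e) ∈ c.U := by rw [E.proj_smul]; exact hUe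
  have hpθm : E.proj (E.Θ e) = E.proj (E.smul (-1) e) := by
    rw [proj_theta, E.proj_smul]
  have hUadd : E.proj (E.add (E.Θ e) (E.smul (-1) e)) ∈ c.U := by
    rw [E.proj_add _ _ hpθm]; exact hUθe
  have hUbp : E.proj (bPart E e) ∈ c.U := by rw [proj_bPart]; exact hUe
  refine c.coord_inj hUbp hUb (by rw [proj_bPart]; rw [hpe]; exact h) ?_
  have hcb : c.coordOf (bPart E e) hUbp
      = (2⁻¹ * Complex.I) • (c.coordOf (E.Θ e) hUθe + (-1 : ℂ) • c.coordOf e hUe) := by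
    show c.coordOf (E.smul (2⁻¹ * Complex.I) (E.add (E.Θ e) (E.smul (-1) e))) hUbp = _
    rw [c.coord_smul _ _ hUadd hUbp, c.coord_add hpθm hUθe hUme hUadd,
      c.coord_smul _ _ hUe hUme]
  have hce : c.coordOf e hUe = c.coordOf a hUa + Complex.I • c.coordOf b hUb := by
    have := c.coord_add hpsb hUa hUsb hUe
    rw [this, c.coord_smul _ _ hUb hUsb]
  have hcθ : c.coordOf (E.Θ e) hUθe
      = c.coordOf a hUa + (-Complex.I) • c.coordOf b hUb := by
    have h1 : E.proj (E.add a (E.smul (-Complex.I) b)) ∈ c.U := by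
      rw [E.proj_add _ _ (by rw [E.proj_smul]; exact h)]; exact hUa
    rw [c.coord_congr hθe hUθe h1,
      c.coord_add (by rw [E.proj_smul]; exact h) hUa hUsb' h1,
      c.coord_smul _ _ hUb hUsb']
  rw [hcb, hce, hcθ]
  funext i
  simp only [Pi.smul_apply, Pi.add_apply, smul_eq_mul, neg_mul, one_mul]
  have hI := Complex.I_mul_I
  set α := c.coordOf a hUa i
  set β := c.coordOf b hUb i
  linear_combination (-(2⁻¹ * β) - 2⁻¹ * β) * hI

lemma g_linv (e : E.E) : E.add (aPart E e) (E.smul Complex.I (bPart E e)) = e := by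
  obtain ⟨c, hx⟩ := bchartAt E.toCplxBundle (E.proj e)
  have hU : E.proj e ∈ c.U := hx
  have hUθ : E.proj (E.Θ e) ∈ c.U := by rw [proj_theta]; exact hU
  have hUme : E.proj (E.smul (-1) e) ∈ c.U := by rw [E.proj_smul]; exact hU
  have hpθm : E.proj (E.Θ e) = E.proj (E.smul (-1) e) := by rw [proj_theta, E.proj_smul]
  have hpθ : E.proj e = E.proj (E.Θ e) := proj_eΘ E e
  have hUadd1 : E.proj (E.add e (E.Θ e)) ∈ c.U := by rw [E.proj_add _ _ hpθ]; exact hU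
  have hUadd2 : E.proj (E.add (E.Θ e) (E.smul (-1) e)) ∈ c.U := by
    rw [E.proj_add _ _ hpθm]; exact hUθ
  have hUa : E.proj (aPart E e) ∈ c.U := by rw [proj_aPart]; exact hU
  have hUb : E.proj (bPart E e) ∈ c.U := by rw [proj_bPart]; exact hU
  have hUsb : E.proj (E.smul Complex.I (bPart E e)) ∈ c.U := by rw [E.proj_smul]; exact hUb
  have hpab : E.proj (aPart E e) = E.proj (E.smul Complex.I (bPart E e)) := by
    rw [proj_aPart, E.proj_smul, proj_bPart]
  have hUall : E.proj (E.add (aPart E e) (E.smul Complex.I (bPart E e))) ∈ c.U := by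
    rw [E.proj_add _ _ hpab]; exact hUa
  refine c.coord_inj hUall hU (by rw [E.proj_add _ _ hpab, proj_aPart]) ?_
  have hca : c.coordOf (aPart E e) hUa
      = (2⁻¹ : ℂ) • (c.coordOf e hU + c.coordOf (E.Θ e) hUθ) := by
    show c.coordOf (E.smul 2⁻¹ (E.add e (E.Θ e))) hUa = _
    rw [c.coord_smul _ _ hUadd1 hUa, c.coord_add hpθ hU hUθ hUadd1]
  have hcb : c.coordOf (bPart E e) hUb
      = (2⁻¹ * Complex.I) • (c.coordOf (E.Θ e) hUθ + (-1 : ℂ) • c.coordOf e hU) := by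
    show c.coordOf (E.smul (2⁻¹ * Complex.I) (E.add (E.Θ e) (E.smul (-1) e))) hUb = _
    rw [c.coord_smul _ _ hUadd2 hUb, c.coord_add hpθm hUθ hUme hUadd2,
      c.coord_smul _ _ hU hUme]
  rw [c.coord_add hpab hUa hUsb hUall, c.coord_smul _ _ hUb hUsb, hca, hcb]
  funext i
  simp only [Pi.smul_apply, Pi.add_apply, smul_eq_mul, neg_mul, one_mul]
  have hI := Complex.I_mul_I
  set ε := c.coordOf e hU i
  set δ := c.coordOf (E.Θ e) hUθ i
  linear_combination (2⁻¹ * δ - 2⁻¹ * ε) * hI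

end RVBAux

end Aux6

noncomputable section Aux7

open Matrix Topology Classical

namespace RVBAux

variable {X : Type} [TopologicalSpace X] {k : ℕ} (E : RealBundle X id k)

/-- The complexification map `(a, b) ↦ a + i b`. -/
def gmap (p : fiberProdR (fixBundle E) (fixBundle E)) : E.E :=
  E.add p.val.1.val (E.smul Complex.I p.val.2.val)

/-- Its inverse `e ↦ ((e + Θe)/2, (Θe - e)·(i/2))`. -/
def ginvmap (e : E.E) : fiberProdR (fixBundle E) (fixBundle E) :=
  ⟨(⟨aPart E e, theta_aPart E e⟩, ⟨bPart E e, theta_bPart E e⟩), by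
    show E.proj (aPart E e) = E.proj (bPart E e)
    rw [proj_aPart, proj_bPart]⟩

lemma fib_proj_eq (p : fiberProdR (fixBundle E) (fixBundle E)) :
    E.proj p.val.1.val = E.proj p.val.2.val := p.prop

lemma cont_gmap : Continuous (gmap E) := by
  rw [continuous_iff_continuousAt]
  intro p₀
  obtain ⟨c, hx⟩ := bchartAt E.toCplxBundle (E.proj p₀.val.1.val)
  set W : Set (fiberProdR (fixBundle E) (fixBundle E)) :=
    (fun p => E.proj p.val.1.val) ⁻¹' c.U with hW
  have hcontp : Continuous fun p : fiberProdR (fixBundle E) (fixBundle E) =>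
      E.proj p.val.1.val :=
    E.proj_cont.comp (continuous_subtype_val.comp (continuous_fst.comp continuous_subtype_val))
  have hWo : IsOpen W := c.openU.preimage hcontp
  have hWm : p₀ ∈ W := hx
  refine ContinuousOn.continuousAt ?_ (hWo.mem_nhds hWm)
  rw [continuousOn_iff_continuous_restrict]
  have hq : Continuous fun p : ↥W =>
      (c.φ.symm (⟨E.proj p.val.val.1.val, p.prop⟩,
        c.coordOf p.val.val.1.val p.prop
          + Complex.I • c.coordOf p.val.val.2.val (fib_proj_eq E p.val ▸ p.prop))).val := by
    refine continuous_subtype_val.comp (c.φ.symm.continuous.comp (Continuous.prodMk ?_ ?_))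
    · exact (hcontp.comp continuous_subtype_val).subtype_mk _
    · refine Continuous.fun_add ?_ (Continuous.fun_const_smul ?_ _)
      · exact continuous_snd.comp (c.φ.continuous.comp
          ((((continuous_subtype_val.comp (continuous_fst.comp continuous_subtype_val) :
              Continuous fun p : fiberProdR (fixBundle E) (fixBundle E) => p.val.1.val).comp
                continuous_subtype_val) :
              Continuous fun p : ↥W => p.val.val.1.val).subtype_mk _))
      · exact continuous_snd.comp (c.φ.continuous.comp
          ((((continuous_subtype_val.comp (continuous_snd.comp continuous_subtype_val) :
              Continuous fun p : fiberProdR (fixBundle E) (fixBundle E) => p.val.2.val).comp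
                continuous_subtype_val) :
              Continuous fun p : ↥W => p.val.val.2.val).subtype_mk _))
  refine Continuous.congr hq ?_
  intro p
  set a : E.E := p.val.val.1.val
  set b : E.E := p.val.val.2.val
  have hUa : E.proj a ∈ c.U := p.prop
  have hUb : E.proj b ∈ c.U := fib_proj_eq E p.val ▸ p.prop
  have hpb : E.proj a = E.proj b := fib_proj_eq E p.val
  have hpsb : E.proj a = E.proj (E.smul Complex.I b) := by rw [E.proj_smul]; exact hpb
  have hUsb : E.proj (E.smul Complex.I b) ∈ c.U := by rw [E.proj_smul]; exact hUb
  have hUadd : E.proj (E.add a (E.smul Complex.I b)) ∈ c.U := by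
    rw [E.proj_add _ _ hpsb]; exact hUa
  show (c.emk ⟨E.proj a, hUa⟩ (c.coordOf a hUa + Complex.I • c.coordOf b hUb))
      = E.add a (E.smul Complex.I b)
  refine c.coord_inj (c.mem_mk _ _) hUadd ?_ ?_
  · rw [c.proj_mk, E.proj_add _ _ hpsb]
  · rw [c.coord_mk, c.coord_add hpsb hUa hUsb hUadd, c.coord_smul _ _ hUb hUsb]

lemma cont_aPart : Continuous (aPart E) := by
  rw [continuous_iff_continuousAt]
  intro e₀
  obtain ⟨c, hx⟩ := bchartAt E.toCplxBundle (E.proj e₀)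
  set W : Set E.E := E.proj ⁻¹' c.U with hW
  have hWo : IsOpen W := c.openU.preimage E.proj_cont
  refine ContinuousOn.continuousAt ?_ (hWo.mem_nhds hx)
  rw [continuousOn_iff_continuous_restrict]
  have hq : Continuous fun e : ↥W =>
      (c.φ.symm (⟨E.proj e.val, e.prop⟩,
        (2⁻¹ : ℂ) • (c.coordOf e.val e.prop
          + c.coordOf (E.Θ e.val) ((proj_theta E e.val).symm ▸ e.prop)))).val := by
    refine continuous_subtype_val.comp (c.φ.symm.continuous.comp (Continuous.prodMk ?_ ?_))
    · exact (E.proj_cont.comp continuous_subtype_val).subtype_mk _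
    · refine Continuous.fun_const_smul (Continuous.fun_add ?_ ?_) _
      · exact continuous_snd.comp (c.φ.continuous.comp (continuous_subtype_val.subtype_mk _))
      · exact continuous_snd.comp (c.φ.continuous.comp
          ((E.Θ.continuous.comp continuous_subtype_val).subtype_mk _))
  refine Continuous.congr hq ?_
  intro e
  have hU : E.proj e.val ∈ c.U := e.prop
  have hUθ : E.proj (E.Θ e.val) ∈ c.U := by rw [proj_theta]; exact hU
  have hpθ : E.proj e.val = E.proj (E.Θ e.val) := proj_eΘ E e.val
  have hUadd : E.proj (E.add e.val (E.Θ e.val)) ∈ c.U := by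
    rw [E.proj_add _ _ hpθ]; exact hU
  have hUa : E.proj (aPart E e.val) ∈ c.U := by rw [proj_aPart]; exact hU
  show (c.emk ⟨E.proj e.val, hU⟩
      ((2⁻¹ : ℂ) • (c.coordOf e.val hU + c.coordOf (E.Θ e.val) hUθ))) = aPart E e.val
  refine c.coord_inj (c.mem_mk _ _) hUa ?_ ?_
  · rw [c.proj_mk, proj_aPart]
  · rw [c.coord_mk]
    have hca : c.coordOf (aPart E e.val) hUa
        = (2⁻¹ : ℂ) • (c.coordOf e.val hU + c.coordOf (E.Θ e.val) hUθ) := by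
      show c.coordOf (E.smul 2⁻¹ (E.add e.val (E.Θ e.val))) hUa = _
      rw [c.coord_smul _ _ hUadd hUa, c.coord_add hpθ hU hUθ hUadd]
    rw [hca]

lemma cont_bPart : Continuous (bPart E) := by
  rw [continuous_iff_continuousAt]
  intro e₀
  obtain ⟨c, hx⟩ := bchartAt E.toCplxBundle (E.proj e₀)
  set W : Set E.E := E.proj ⁻¹' c.U with hW
  have hWo : IsOpen W := c.openU.preimage E.proj_cont
  refine ContinuousOn.continuousAt ?_ (hWo.mem_nhds hx)
  rw [continuousOn_iff_continuous_restrict]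
  have hq : Continuous fun e : ↥W =>
      (c.φ.symm (⟨E.proj e.val, e.prop⟩,
        (2⁻¹ * Complex.I) • (c.coordOf (E.Θ e.val) ((proj_theta E e.val).symm ▸ e.prop)
          + (-1 : ℂ) • c.coordOf e.val e.prop))).val := by
    refine continuous_subtype_val.comp (c.φ.symm.continuous.comp (Continuous.prodMk ?_ ?_))
    · exact (E.proj_cont.comp continuous_subtype_val).subtype_mk _
    · refine Continuous.fun_const_smul (Continuous.fun_add ?_ (Continuous.fun_const_smul ?_ _)) _
      · exact continuous_snd.comp (c.φ.continuous.comp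
          ((E.Θ.continuous.comp continuous_subtype_val).subtype_mk _))
      · exact continuous_snd.comp (c.φ.continuous.comp (continuous_subtype_val.subtype_mk _))
  refine Continuous.congr hq ?_
  intro e
  have hU : E.proj e.val ∈ c.U := e.prop
  have hUθ : E.proj (E.Θ e.val) ∈ c.U := by rw [proj_theta]; exact hU
  have hUme : E.proj (E.smul (-1) e.val) ∈ c.U := by rw [E.proj_smul]; exact hU
  have hpθm : E.proj (E.Θ e.val) = E.proj (E.smul (-1) e.val) := by
    rw [proj_theta, E.proj_smul]
  have hUadd : E.proj (E.add (E.Θ e.val) (E.smul (-1) e.val)) ∈ c.U := by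
    rw [E.proj_add _ _ hpθm]; exact hUθ
  have hUb : E.proj (bPart E e.val) ∈ c.U := by rw [proj_bPart]; exact hU
  show (c.emk ⟨E.proj e.val, hU⟩
      ((2⁻¹ * Complex.I) • (c.coordOf (E.Θ e.val) hUθ + (-1 : ℂ) • c.coordOf e.val hU)))
      = bPart E e.val
  refine c.coord_inj (c.mem_mk _ _) hUb ?_ ?_
  · rw [c.proj_mk, proj_bPart]
  · rw [c.coord_mk]
    have hcb : c.coordOf (bPart E e.val) hUb
        = (2⁻¹ * Complex.I) • (c.coordOf (E.Θ e.val) hUθ + (-1 : ℂ) • c.coordOf e.val hU) := by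
      show c.coordOf (E.smul (2⁻¹ * Complex.I) (E.add (E.Θ e.val) (E.smul (-1) e.val))) hUb = _
      rw [c.coord_smul _ _ hUadd hUb, c.coord_add hpθm hUθ hUme hUadd,
        c.coord_smul _ _ hU hUme]
    rw [hcb]

lemma cont_ginvmap : Continuous (ginvmap E) := by
  apply Continuous.subtype_mk
  exact Continuous.prodMk ((cont_aPart E).subtype_mk _) ((cont_bPart E).subtype_mk _)

end RVBAux

end Aux7

/-- Every "real" vector bundle `(E, Θ)` over `(X, id)` is the
complexification of an ℝ-vector bundle: the fixed-point set `E^Θ` is an ℝ-vector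
bundle `F` over `X`, and the map `F ⊕ F → E`, `(v, w) ↦ v + i·w`, is an isomorphism
`F ⊗_ℝ ℂ ≅ E` intertwining conjugation in the second tensor factor with `Θ`. -/
theorem real_bundle_over_trivial_involution_is_complexification
    {X : Type} [TopologicalSpace X] (k : ℕ) (E : RealBundle X id k) :
    ∃ (F : RealScalarBundle X k) (j : F.E → E.E),
      IsEmbedding j ∧
      Set.range j = {e : E.E | E.Θ e = e} ∧
      (∀ v, E.proj (j v) = F.proj v) ∧
      (∀ v w, F.proj v = F.proj w → j (F.add v w) = E.add (j v) (j w)) ∧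
      (∀ (r : ℝ) (v : F.E), j (F.smul r v) = E.smul (r : ℂ) (j v)) ∧
      ∃ g : fiberProdR F F ≃ₜ E.E,
        (∀ p : fiberProdR F F,
          g p = E.add (j p.val.1) (E.smul Complex.I (j p.val.2))) ∧
        (∀ (p : fiberProdR F F) (hmem : F.proj p.val.1 = F.proj (F.smul (-1) p.val.2)),
          E.Θ (g p) = g ⟨(p.val.1, F.smul (-1) p.val.2), hmem⟩) := by
  refine ⟨RVBAux.fixBundle E, Subtype.val, IsEmbedding.subtypeVal, Subtype.range_coe_subtype,
    fun v => rfl, ?_, fun r v => rfl, ?_⟩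
  · intro v w h
    show (RVBAux.fixAdd E v w).val = E.add v.val w.val
    unfold RVBAux.fixAdd
    have h' : E.proj v.val = E.proj w.val := h
    exact congrArg Subtype.val (dif_pos h')
  · refine ⟨⟨⟨RVBAux.gmap E, RVBAux.ginvmap E, ?_, ?_⟩,
      RVBAux.cont_gmap E, RVBAux.cont_ginvmap E⟩, fun p => rfl, ?_⟩
    · intro p
      apply Subtype.ext
      apply Prod.ext
      · exact Subtype.ext
          (RVBAux.aPart_g E p.val.1.val p.val.2.val p.prop p.val.1.prop p.val.2.prop)
      · exact Subtype.ext
          (RVBAux.bPart_g E p.val.1.val p.val.2.val p.prop p.val.1.prop p.val.2.prop)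
    · exact fun e => RVBAux.g_linv E e
    · intro p hmem
      show E.Θ (E.add p.val.1.val (E.smul Complex.I p.val.2.val))
        = E.add p.val.1.val (E.smul Complex.I (E.smul ((-1 : ℝ) : ℂ) p.val.2.val))
      rw [show ((-1 : ℝ) : ℂ) = (-1 : ℂ) by norm_num]
      exact RVBAux.theta_g E p.val.1.val p.val.2.val p.prop p.val.1.prop p.val.2.prop
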